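/- Let (M,d) be a complete geodesic space with curv(M) ≤ 0 (in the Alexandrov sense, equivalently: d²(p,γ(t)) ≤ (1-t)d²(p,x) + t·d²(p,y) - t(1-t)d²(x,y) for all geodesics γ from x to y and all p). If moreover M has finite diameter D, then for every p ∈ M the function x ↦ d²(p,x) is geodesically β-expconcave for every β with 0 < β ≤ 1/(2D²). -/

import Mathlib

open Real

/-- A constant-speed geodesic parametrized by `[0,1]`. -/
def IsGeodesic {M : Type*} [MetricSpace M] (γ : ℝ → M) : Prop :=
  ∀ s ∈ Set.Icc (0:ℝ) 1, ∀ t ∈ Set.Icc (0:ℝ) 1,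
    dist (γ s) (γ t) = |t - s| * dist (γ 0) (γ 1)

/-- A geodesic metric space. -/
def GeodesicSpace (M : Type*) [MetricSpace M] : Prop :=
  ∀ x y : M, ∃ γ : ℝ → M, IsGeodesic γ ∧ γ 0 = x ∧ γ 1 = y

/-- Geodesic convexity. -/
def GeodesicallyConvex {M : Type*} [MetricSpace M] (f : M → ℝ) : Prop :=
  ∀ γ : ℝ → M, IsGeodesic γ → ConvexOn ℝ (Set.Icc (0:ℝ) 1) (fun t => f (γ t))

/-- Geodesic concavity. -/
def GeodesicallyConcave {M : Type*} [MetricSpace M] (f : M → ℝ) : Prop :=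
  GeodesicallyConvex (fun x => -f x)

/-!
Along a geodesic `γ`, put `g t = d²(p, γ t)`. On the subsegment from `γ u` to `γ v`, the
comparison inequality at `t = 1/2` gives `g ((u+v)/2) ≤ (g u + g v)/2 - E²/4` with
`E = d(γ u, γ v)`, while `|g u - g v| ≤ 2D·E`. Writing the mean of `e^{-β g u}` and `e^{-β g v}` as
`e^{-β (g u + g v)/2} · cosh (β (g u - g v)/2)` and using `cosh x ≤ e^{x²/2}`, the condition
`β (2D)² ≤ 2` bounds the `cosh` factor by `e^{β E²/4}`: this is the 2-convex, `2D`-Lipschitz case of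
"`α`-convex and `L`-Lipschitz implies `α/L²`-expconcave", at midpoints. So `e^{-β g}` is midpoint
concave, hence concave, being continuous.
-/

open Set

lemma nonpos_on_Icc_of_midpoint_convex {g : ℝ → ℝ} {x y : ℝ} (hg : ContinuousOn g (Icc x y))
    (hmid : ∀ u ∈ Icc x y, ∀ v ∈ Icc x y, g ((u + v) / 2) ≤ (g u + g v) / 2)
    (hgx : g x ≤ 0) (hgy : g y ≤ 0) : ∀ t ∈ Icc x y, g t ≤ 0 := by
  intro t ht
  obtain ⟨w, hw, hmax⟩ := isCompact_Icc.exists_isMaxOn ⟨t, ht⟩ hg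
  suffices g w ≤ 0 from (hmax ht).trans this
  -- Reflect about the maximum point `w` as far as possible: one of `w ∓ h` is an endpoint, where `g ≤ 0`.
  set h := min (w - x) (y - w) with h_def
  have hh : 0 ≤ h := le_min (by linarith [hw.1]) (by linarith [hw.2])
  have hl : w - h ∈ Icc x y := ⟨by linarith [min_le_left (w - x) (y - w)], by linarith [hw.2]⟩
  have hr : w + h ∈ Icc x y :=
    ⟨by linarith [hw.1], by linarith [min_le_right (w - x) (y - w)]⟩
  have hw_mid : g w ≤ (g (w - h) + g (w + h)) / 2 := by
    simpa only [show (w - h + (w + h)) / 2 = w by ring] using hmid _ hl _ hr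
  have hend : g (w - h) ≤ 0 ∨ g (w + h) ≤ 0 := by
    rcases min_cases (w - x) (y - w) with ⟨he, -⟩ | ⟨he, -⟩
    · left; rwa [show w - h = x by rw [h_def, he]; ring]
    · right; rwa [show w + h = y by rw [h_def, he]; ring]
  have hl_le : g (w - h) ≤ g w := hmax hl
  have hr_le : g (w + h) ≤ g w := hmax hr
  rcases hend with hend | hend <;> linarith

lemma convexOn_of_midpoint_le {s : Set ℝ} {f : ℝ → ℝ} (hs : Convex ℝ s)
    (hf : ContinuousOn f s) (hmid : ∀ u ∈ s, ∀ v ∈ s, f ((u + v) / 2) ≤ (f u + f v) / 2) :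
    ConvexOn ℝ s f := by
  refine LinearOrder.convexOn_of_lt hs fun x hx y hy hxy a b ha hb hab => ?_
  obtain rfl : a = 1 - b := by linarith
  have hsub : Icc x y ⊆ s := hs.ordConnected.out hx hy
  have hyx : y - x ≠ 0 := sub_ne_zero.2 hxy.ne'
  set k := (f y - f x) / (y - x)
  have hk : k * (y - x) = f y - f x := div_mul_cancel₀ _ hyx
  have hchord := nonpos_on_Icc_of_midpoint_convex (g := fun t => f t - (f x + k * (t - x)))
    ((hf.mono hsub).sub (by fun_prop))
    (fun u hu v hv => by
      have := hmid u (hsub hu) v (hsub hv)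
      have hlin : k * ((u + v) / 2 - x) = (k * (u - x) + k * (v - x)) / 2 := by ring
      linarith)
    (by simp) (by linarith)
    ((1 - b) * x + b * y) ⟨by nlinarith, by nlinarith⟩
  have hpt : k * ((1 - b) * x + b * y - x) = b * (f y - f x) := by rw [← hk]; ring
  simp only [smul_eq_mul, hpt] at hchord ⊢
  linarith

lemma exp_neg_mul_add_exp_neg_mul_div_two_le {α β L a b m e : ℝ} (hβ : 0 ≤ β)
    (hm : m ≤ (a + b) / 2 - α / 8 * e ^ 2) (hab : |a - b| ≤ L * e) (hβL : β * L ^ 2 ≤ α) :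
    (exp (-β * a) + exp (-β * b)) / 2 ≤ exp (-β * m) := by
  have hsplit : (exp (-β * a) + exp (-β * b)) / 2
      = exp (-β * ((a + b) / 2)) * cosh (β * (a - b) / 2) := by
    rw [cosh_eq, mul_div_assoc', mul_add, ← exp_add, ← exp_add]
    ring_nf
  have hsq : (a - b) ^ 2 ≤ (L * e) ^ 2 := sq_le_sq' (abs_le.1 hab).1 (abs_le.1 hab).2
  have hcosh : (β * (a - b) / 2) ^ 2 / 2 ≤ β * α * e ^ 2 / 8 :=
    calc (β * (a - b) / 2) ^ 2 / 2 = β ^ 2 * (a - b) ^ 2 / 8 := by ring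
      _ ≤ β * (β * L ^ 2) * e ^ 2 / 8 := by nlinarith [sq_nonneg β]
      _ ≤ β * α * e ^ 2 / 8 := by gcongr
  calc (exp (-β * a) + exp (-β * b)) / 2
      ≤ exp (-β * ((a + b) / 2)) * exp (β * α * e ^ 2 / 8) := by
        rw [hsplit]
        gcongr
        exact (cosh_le_exp_half_sq _).trans (exp_le_exp.2 hcosh)
    _ = exp (-β * ((a + b) / 2 - α / 8 * e ^ 2)) := by rw [← exp_add]; ring_nf
    _ ≤ exp (-β * m) := exp_le_exp.2 (by nlinarith)

lemma abs_dist_sq_sub_dist_sq_le {M : Type*} [MetricSpace M] {p x y : M} {D : ℝ}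
    (hx : dist p x ≤ D) (hy : dist p y ≤ D) :
    |dist p x ^ 2 - dist p y ^ 2| ≤ 2 * D * dist x y := by
  have hsub : |dist p x - dist p y| ≤ dist x y := by
    simpa only [dist_comm p] using abs_dist_sub_le x y p
  calc |dist p x ^ 2 - dist p y ^ 2| = (dist p x + dist p y) * |dist p x - dist p y| := by
        rw [sq_sub_sq, abs_mul, abs_of_nonneg (by positivity)]
    _ ≤ 2 * D * dist x y := by gcongr <;> linarith [dist_nonneg (x := p) (y := x)]

namespace IsGeodesic

variable {M : Type*} [MetricSpace M] {γ : ℝ → M}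

lemma continuousOn (hγ : IsGeodesic γ) : ContinuousOn γ (Icc 0 1) := by
  refine (LipschitzOnWith.of_dist_le_mul (K := (dist (γ 0) (γ 1)).toNNReal)
    fun s hs t ht => ?_).continuousOn
  rw [hγ s hs t ht, Real.coe_toNNReal _ dist_nonneg, Real.dist_eq, abs_sub_comm, mul_comm]

lemma comp_affine (hγ : IsGeodesic γ) {u v : ℝ} (hu : u ∈ Icc (0 : ℝ) 1) (hv : v ∈ Icc (0 : ℝ) 1) :
    IsGeodesic fun s => γ (u + s * (v - u)) := by
  have hmem : ∀ r ∈ Icc (0 : ℝ) 1, u + r * (v - u) ∈ Icc (0 : ℝ) 1 := fun r hr =>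
    ⟨by nlinarith [hu.1, hv.1, hr.1, hr.2], by nlinarith [hu.2, hv.2, hr.1, hr.2]⟩
  intro s hs t ht
  rw [hγ _ (hmem s hs) _ (hmem t ht), hγ _ (hmem 0 (by simp)) _ (hmem 1 (by simp)),
    show u + t * (v - u) - (u + s * (v - u)) = (t - s) * (v - u) by ring,
    show u + 1 * (v - u) - (u + 0 * (v - u)) = v - u by ring, abs_mul]
  ring

end IsGeodesic

theorem sq_dist_expconcave_of_nonpos_curv_general
    {M : Type*} [MetricSpace M]
    -- curv(M) ≤ 0, in comparison form
    (hcurv : ∀ (p : M) (γ : ℝ → M), IsGeodesic γ → ∀ t ∈ Set.Icc (0:ℝ) 1,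
      dist p (γ t) ^ 2 ≤ (1 - t) * dist p (γ 0) ^ 2 + t * dist p (γ 1) ^ 2
        - t * (1 - t) * dist (γ 0) (γ 1) ^ 2)
    (D : ℝ) (hdiam : ∀ x y : M, dist x y ≤ D) :
    ∀ (p : M) (β : ℝ), 0 < β → β ≤ 1 / (2 * D ^ 2) →
      GeodesicallyConcave (fun x => Real.exp (-β * dist p x ^ 2)) := by
  intro p β hβ hβD γ hγ
  have hβL : β * (2 * D) ^ 2 ≤ 2 := by
    have := mul_le_of_le_div₀ zero_le_one (by positivity) hβD
    linarith
  refine convexOn_of_midpoint_le (convex_Icc 0 1)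
    ((by fun_prop : Continuous fun x => -exp (-β * dist p x ^ 2)).comp_continuousOn
      hγ.continuousOn) fun u hu v hv => ?_
  have hmid := hcurv p _ (hγ.comp_affine hu hv) (1 / 2) (by norm_num)
  simp only [show u + 1 / 2 * (v - u) = (u + v) / 2 by ring, zero_mul, one_mul, add_zero,
    add_sub_cancel] at hmid
  have := exp_neg_mul_add_exp_neg_mul_div_two_le (α := 2) (m := dist p (γ ((u + v) / 2)) ^ 2)
    hβ.le (by linarith) (abs_dist_sq_sub_dist_sq_le (hdiam p (γ u)) (hdiam p (γ v))) hβL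
  beta_reduce
  linarith

/-- On a complete geodesic space of nonpositive curvature with diameter at most `D`,
the squared distance `x ↦ d²(p,x)` is geodesically `β`-expconcave for `0 < β ≤ 1/(2D²)`. -/
theorem sq_dist_expconcave_of_nonpos_curv
    {M : Type*} [MetricSpace M] [CompleteSpace M] (hgeo : GeodesicSpace M)
    -- curv(M) ≤ 0, in comparison form
    (hcurv : ∀ (p : M) (γ : ℝ → M), IsGeodesic γ → ∀ t ∈ Set.Icc (0:ℝ) 1,
      dist p (γ t) ^ 2 ≤ (1 - t) * dist p (γ 0) ^ 2 + t * dist p (γ 1) ^ 2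
        - t * (1 - t) * dist (γ 0) (γ 1) ^ 2)
    (D : ℝ) (hD : 0 < D) (hdiam : ∀ x y : M, dist x y ≤ D) :
    ∀ (p : M) (β : ℝ), 0 < β → β ≤ 1 / (2 * D ^ 2) →
      GeodesicallyConcave (fun x => Real.exp (-β * dist p x ^ 2)) :=
  sq_dist_expconcave_of_nonpos_curv_general hcurv D hdiam
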